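/- arXiv:2402.06336 — 3 statements merged into one kernel-verified Lean document; each statement's English description precedes it below -/
import Mathlib

section
/- Consider the linear program: minimize X₁₃ - X₁₂₃ subject to X₁₂₃ = Y (where Y linearizes X₁₃·x₂), the McCormick inequalities for Y = X₁₃·x₂ over X₁₃ ∈ [0,1], x₂ ∈ [0,1], the McCormick inequalities for X₁₃ = x₁·x₃ over x₁, x₃ ∈ [0,1], and 0 ≤ x₁,x₂,x₃ ≤ 1. Its optimal value is 0. -/
theorem stmt_10 :
    IsLeast {v : ℝ | ∃ x₁ x₂ x₃ X₁₃ Y X₁₂₃ : ℝ,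
      X₁₂₃ = Y ∧
      -- McCormick inequalities for Y = X₁₃ · x₂ over [0,1]²
      Y ≥ 0 ∧ Y ≥ X₁₃ + x₂ - 1 ∧ Y ≤ X₁₃ ∧ Y ≤ x₂ ∧
      -- McCormick inequalities for X₁₃ = x₁ · x₃ over [0,1]²
      X₁₃ ≥ 0 ∧ X₁₃ ≥ x₁ + x₃ - 1 ∧ X₁₃ ≤ x₁ ∧ X₁₃ ≤ x₃ ∧
      -- box constraints
      0 ≤ x₁ ∧ x₁ ≤ 1 ∧ 0 ≤ x₂ ∧ x₂ ≤ 1 ∧ 0 ≤ x₃ ∧ x₃ ≤ 1 ∧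
      v = X₁₃ - X₁₂₃} 0 := by
  constructor
  · exact ⟨0, 0, 0, 0, 0, 0, by norm_num⟩
  · rintro v ⟨x₁, x₂, x₃, X₁₃, Y, X₁₂₃, h⟩
    obtain ⟨h1, h2, h3, h4, h5, h6, h7, h8, h9, h10, h11, h12, h13, h14, h15, h16⟩ := h
    linarith
end

section
/- Consider the linear program: minimize X₁₃ - X₁₂₃ subject to the McCormick inequalities (over the unit box) for X₁₂₃ = X₁₂·x₃, for X₁₂ = x₁·x₂, for X₁₃ = x₁·x₃, and 0 ≤ x₁,x₂,x₃ ≤ 1. Its optimal value is -1/2. -/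
theorem stmt_11 :
    IsLeast {v : ℝ | ∃ x₁ x₂ x₃ X₁₂ X₁₃ X₁₂₃ : ℝ,
      -- McCormick inequalities for X₁₂₃ = X₁₂ · x₃ over [0,1]²
      X₁₂₃ ≥ 0 ∧ X₁₂₃ ≥ X₁₂ + x₃ - 1 ∧ X₁₂₃ ≤ X₁₂ ∧ X₁₂₃ ≤ x₃ ∧
      -- McCormick inequalities for X₁₂ = x₁ · x₂ over [0,1]²
      X₁₂ ≥ 0 ∧ X₁₂ ≥ x₁ + x₂ - 1 ∧ X₁₂ ≤ x₁ ∧ X₁₂ ≤ x₂ ∧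
      -- McCormick inequalities for X₁₃ = x₁ · x₃ over [0,1]²
      X₁₃ ≥ 0 ∧ X₁₃ ≥ x₁ + x₃ - 1 ∧ X₁₃ ≤ x₁ ∧ X₁₃ ≤ x₃ ∧
      -- box constraints
      0 ≤ x₁ ∧ x₁ ≤ 1 ∧ 0 ≤ x₂ ∧ x₂ ≤ 1 ∧ 0 ≤ x₃ ∧ x₃ ≤ 1 ∧
      v = X₁₃ - X₁₂₃} (-(1 / 2)) := by
  constructor
  · exact ⟨1/2, 1, 1/2, 1/2, 0, 1/2, by norm_num⟩
  · rintro v ⟨x₁, x₂, x₃, X₁₂, X₁₃, X₁₂₃, h1, h2, h3, h4, h5, h6, h7, h8,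
      h9, h10, h11, h12, h13, h14, h15, h16, h17, h18, rfl⟩
    linarith
end

section
/- Over the box 1 ≤ x₁ ≤ 2, 9 ≤ x₂ ≤ 10, 1 ≤ x₃ ≤ 2, 9 ≤ x₄ ≤ 10, the polynomial x₁x₂x₃x₄ - 10x₁x₂ - x₁x₃x₄ attains its minimum value, and this minimum is at least -38. -/
theorem stmt_19 :
    ∃ v : ℝ, IsLeast {v : ℝ | ∃ x₁ x₂ x₃ x₄ : ℝ,
      1 ≤ x₁ ∧ x₁ ≤ 2 ∧ 9 ≤ x₂ ∧ x₂ ≤ 10 ∧ 1 ≤ x₃ ∧ x₃ ≤ 2 ∧ 9 ≤ x₄ ∧ x₄ ≤ 10 ∧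
      v = x₁ * x₂ * x₃ * x₄ - 10 * x₁ * x₂ - x₁ * x₃ * x₄} v ∧ -38 ≤ v := by
  refine ⟨-38, ⟨⟨2, 10, 1, 9, by norm_num⟩, ?_⟩, le_refl _⟩
  rintro v ⟨x₁, x₂, x₃, x₄, h1, h2, h3, h4, h5, h6, h7, h8, rfl⟩
  have ht1 : (9:ℝ) ≤ x₃ * x₄ := by nlinarith
  have ht2 : x₃ * x₄ ≤ 20 := by nlinarith
  have hg : -19 ≤ x₂ * (x₃ * x₄ - 10) - x₃ * x₄ := by nlinarith [mul_nonneg (by linarith : (0:ℝ) ≤ x₂ - 9) (by linarith : (0:ℝ) ≤ x₃ * x₄ - 9)]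
  have hx1 : (0:ℝ) ≤ x₁ := by linarith
  nlinarith [mul_nonneg hx1 (by linarith : (0:ℝ) ≤ x₂ * (x₃ * x₄ - 10) - x₃ * x₄ + 19)]
end
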